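/- arXiv:1411.1103 — 2 statements merged into one kernel-verified Lean document; each statement's English description precedes it below -/
import Mathlib

section
/- With h as in the differential-rates example (h strictly decreasing and continuous on [0,∞) with range (μ, h(0)], where μ = lim_{π→∞} h(π)), constants r ≤ R with R > μ, define π̂ by: π̂ = 0 if h(0) < r; π̂ = h⁻¹(r) if h(1) ≤ r < h(0); π̂ = 1 if r < h(1) ≤ R; π̂ = h⁻¹(R) if R < h(1). Then π̂ ≥ 0, it satisfies h(π̂) ≤ R, and the optimality equation [r - h(π̂)]⁻ + π̂·[r - h(π̂)] + (R - r)·(π̂ - 1)⁺ = 0 holds, where x⁻ = max(-x,0) and x⁺ = max(x,0). -/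
/-! In each of the four regimes `π̂` sits where the complementarity conditions of the residual
hold: at `π̂ = 0` with `h π̂ ≤ r`, on `h π̂ = r` with `π̂ ≤ 1`, at `π̂ = 1` with `r ≤ h π̂ ≤ R`, or on
`h π̂ = R` with `1 ≤ π̂`. Strict monotonicity of `h` locates `h⁻¹(r)` and `h⁻¹(R)` on the right
side of `1`, and `μ < h 1` (as `h` decreases strictly to `μ`) puts `r` in the domain of `h⁻¹`. -/

open Set Filter Topology

theorem StrictAntiOn.lt_of_tendsto_atTop {α β : Type*} [LinearOrder α] [NoMaxOrder α]
    [TopologicalSpace β] [LinearOrder β] [OrderClosedTopology β] {f : α → β} {a x : α} {μ : β}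
    (hf : StrictAntiOn f (Ici a)) (hlim : Tendsto f atTop (𝓝 μ)) (hx : a ≤ x) : μ < f x := by
  have : Nonempty α := ⟨x⟩
  obtain ⟨y, hxy⟩ := exists_gt x
  have hy : a ≤ y := hx.trans hxy.le
  have hμy : μ ≤ f y :=
    le_of_tendsto hlim <| (eventually_ge_atTop y).mono fun t hyt =>
      hf.antitoneOn hy (hy.trans hyt) hyt
  exact hμy.trans_lt (hf hx hy hxy)

/-- The left-hand side of the optimality equation at the point `π` with `z = h π`. -/
def optimalityResidual (r R π z : ℝ) : ℝ :=
  max (-(r - z)) 0 + π * (r - z) + (R - r) * max (π - 1) 0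

section optimalityResidual

variable {r R π z : ℝ}

theorem optimalityResidual_zero (hz : z ≤ r) : optimalityResidual r R 0 z = 0 := by
  simp [optimalityResidual, hz]

theorem optimalityResidual_self (hπ : π ≤ 1) : optimalityResidual r R π r = 0 := by
  simp [optimalityResidual, hπ]

theorem optimalityResidual_one (hz : r ≤ z) : optimalityResidual r R 1 z = 0 := by
  simp only [optimalityResidual, sub_self, max_self, mul_zero, add_zero, one_mul,
    max_eq_left (neg_nonneg.mpr (sub_nonpos.mpr hz))]
  ring

theorem optimalityResidual_self_right (hrR : r ≤ R) (hπ : 1 ≤ π) :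
    optimalityResidual r R π R = 0 := by
  rw [optimalityResidual, max_eq_left (by linarith), max_eq_left (by linarith)]
  ring

end optimalityResidual

theorem stmt_6_general (h hinv : ℝ → ℝ) (μ r R : ℝ)
    (hanti : StrictAntiOn h (Ici 0))
    (hlim : Tendsto h atTop (nhds μ))
    (hinvspec : ∀ z, μ < z → z ≤ h 0 → 0 ≤ hinv z ∧ h (hinv z) = z)
    (hrR : r ≤ R) (hμR : μ < R)
    (πhat : ℝ)
    (hcase : (h 0 < r ∧ πhat = 0) ∨
             (h 1 ≤ r ∧ r < h 0 ∧ πhat = hinv r) ∨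
             (r < h 1 ∧ h 1 ≤ R ∧ πhat = 1) ∨
             (R < h 1 ∧ πhat = hinv R)) :
    0 ≤ πhat ∧ h πhat ≤ R ∧
      max (-(r - h πhat)) 0 + πhat * (r - h πhat) + (R - r) * max (πhat - 1) 0 = 0 := by
  have h0 : (0 : ℝ) ∈ Ici 0 := self_mem_Ici
  have h1 : (1 : ℝ) ∈ Ici 0 := mem_Ici.mpr zero_le_one
  rcases hcase with ⟨h0r, rfl⟩ | ⟨h1r, hr0, rfl⟩ | ⟨hr1, h1R, rfl⟩ | ⟨hR1, rfl⟩
  · exact ⟨le_rfl, by linarith, optimalityResidual_zero h0r.le⟩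
  · have hμr : μ < r := (hanti.lt_of_tendsto_atTop hlim zero_le_one).trans_le h1r
    obtain ⟨hp0, hpr⟩ := hinvspec r hμr hr0.le
    have hp1 : hinv r ≤ 1 := (hanti.le_iff_ge h1 hp0).mp (hpr.symm ▸ h1r)
    refine ⟨hp0, hpr.symm ▸ hrR, ?_⟩
    rw [hpr]
    exact optimalityResidual_self hp1
  · exact ⟨zero_le_one, h1R, optimalityResidual_one hr1.le⟩
  · have hR0 : R ≤ h 0 := (hR1.trans (hanti h0 h1 zero_lt_one)).le
    obtain ⟨hp0, hpR⟩ := hinvspec R hμR hR0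
    have hp1 : 1 ≤ hinv R := (hanti.le_iff_ge hp0 h1).mp (hpR.symm ▸ hR1.le)
    refine ⟨hp0, hpR.le, ?_⟩
    rw [hpR]
    exact optimalityResidual_self_right hrR hp1

theorem stmt_6 (h hinv : ℝ → ℝ) (μ r R : ℝ)
    (hcont : ContinuousOn h (Ici 0))
    (hanti : StrictAntiOn h (Ici 0))
    (hlim : Tendsto h atTop (nhds μ))
    (hinvspec : ∀ z, μ < z → z ≤ h 0 → 0 ≤ hinv z ∧ h (hinv z) = z)
    (hrR : r ≤ R) (hμR : μ < R)
    (πhat : ℝ)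
    (hcase : (h 0 < r ∧ πhat = 0) ∨
             (h 1 ≤ r ∧ r < h 0 ∧ πhat = hinv r) ∨
             (r < h 1 ∧ h 1 ≤ R ∧ πhat = 1) ∨
             (R < h 1 ∧ πhat = hinv R)) :
    0 ≤ πhat ∧ h πhat ≤ R ∧
      max (-(r - h πhat)) 0 + πhat * (r - h πhat) + (R - r) * max (πhat - 1) 0 = 0 :=
  stmt_6_general h hinv μ r R hanti hlim hinvspec hrR hμR πhat hcase
end

section
/- With h strictly decreasing and continuous on (-∞,1] (restricted domain containing the candidates), constants r, rL with rL ≥ r and μ := h-asymptotics, define π̂ by: π̂ = h⁻¹(2r - rL) if h(0) < 2r - rL; π̂ = 0 if 2r - rL ≤ h(0) < r; π̂ = h⁻¹(r) if h(1) < r ≤ h(0); π̂ = 1 if r ≤ h(1). Then π̂ ≤ 1, h(π̂) ≥ 2r - rL, and the optimality equation (r - rL)·π̂⁻ + π̂·[h(π̂) - r] = [h(π̂) - r]⁺ holds. -/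
open Set Filter

theorem stmt_7 (h hinv : ℝ → ℝ) (M r rL : ℝ)
    (hcont : ContinuousOn h (Iic 1))
    (hanti : StrictAntiOn h (Iic 1))
    (hlim : Tendsto h atBot (nhds M))
    (hbelow : ∀ π ≤ (1 : ℝ), h π < M)
    (hinvspec : ∀ z, h 1 ≤ z → z < M → hinv z ≤ 1 ∧ h (hinv z) = z)
    (hr : r ≤ rL) (hM : 2 * r - rL < M)
    (πhat : ℝ)
    (hcase : (h 0 < 2 * r - rL ∧ πhat = hinv (2 * r - rL)) ∨
             (2 * r - rL ≤ h 0 ∧ h 0 < r ∧ πhat = 0) ∨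
             (h 1 < r ∧ r ≤ h 0 ∧ πhat = hinv r) ∨
             (r ≤ h 1 ∧ πhat = 1)) :
    πhat ≤ 1 ∧ 2 * r - rL ≤ h πhat ∧
      (r - rL) * max (-πhat) 0 + πhat * (h πhat - r) = max (h πhat - r) 0 := by
  have h10 : h 1 < h 0 := hanti (mem_Iic.mpr (by norm_num)) (mem_Iic.mpr le_rfl) (by norm_num)
  rcases hcase with ⟨hc, hp⟩ | ⟨hc1, hc2, hp⟩ | ⟨hc1, hc2, hp⟩ | ⟨hc, hp⟩
  · -- case 1 : πhat = hinv (2r - rL)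
    obtain ⟨hle, heq⟩ := hinvspec (2 * r - rL) (le_of_lt (h10.trans hc)) hM
    rw [hp] at *
    have hneg : hinv (2 * r - rL) ≤ 0 := by
      by_contra hpos
      push_neg at hpos
      have := hanti (mem_Iic.mpr (by norm_num : (0:ℝ) ≤ 1)) (mem_Iic.mpr hle) hpos
      rw [heq] at this
      linarith
    refine ⟨hle, by rw [heq], ?_⟩
    rw [heq]
    have : max (-hinv (2 * r - rL)) 0 = -hinv (2 * r - rL) := max_eq_left (by linarith)
    rw [this]
    have : max (2 * r - rL - r) 0 = 0 := max_eq_right (by linarith)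
    rw [this]; ring
  · -- case 2 : πhat = 0
    subst hp
    refine ⟨by norm_num, hc1, ?_⟩
    simp [max_eq_right (by linarith : h 0 - r ≤ 0)]
  · -- case 3 : πhat = hinv r
    have hrM : r < M := hc2.trans_lt (hbelow 0 (by norm_num))
    obtain ⟨hle, heq⟩ := hinvspec r (le_of_lt hc1) hrM
    rw [hp] at *
    have hpos : 0 ≤ hinv r := by
      by_contra hneg
      push_neg at hneg
      have := hanti (mem_Iic.mpr hle) (mem_Iic.mpr (by norm_num : (0:ℝ) ≤ 1)) hneg
      rw [heq] at this
      linarith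
    refine ⟨hle, by rw [heq]; linarith, ?_⟩
    rw [heq]
    simp [max_eq_right (neg_nonpos.mpr hpos)]
  · -- case 4 : πhat = 1
    subst hp
    refine ⟨le_refl 1, by linarith, ?_⟩
    rw [max_eq_right (by norm_num : (-1:ℝ) ≤ 0), max_eq_left (by linarith : (0:ℝ) ≤ h 1 - r)]
    ring
end
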